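/- Let n ≥ 4 be even and let I ⊆ {1,…,n} be nonempty. The I-canonical elements for the lattice 𝔍_w of Spin(2n)/{1,w} are precisely the following elements, where j ranges over the odd elements of I_0: (a) if Σ_{i∈I_0} i is even, the elements ξ_I + δ_I(n−1)H_{n−1} and ξ_I + δ_I(n−1)H_j; (b) if Σ_{i∈I_0} i is odd, the elements ξ_I + ε^0_I H_j + ε^1_I δ_I(n) H_j. -/
import Mathlib


/-- The duals of the simple roots of `so(2n)` (1-based index):
`H_i = E_1+⋯+E_i` for `i ≤ n-2`, `H_{n-1} = (E_1+⋯+E_{n-1}-E_n)/2`,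
`H_n = (E_1+⋯+E_{n-1}+E_n)/2`. -/
noncomputable def Hso (n i : ℕ) : Fin n → ℝ :=
  if i = n - 1 then (fun j => if (j : ℕ) + 2 ≤ n then 1 / 2 else -(1 / 2))
  else if i = n then (fun _ => 1 / 2)
  else fun j => if (j : ℕ) + 1 ≤ i then 1 else 0

/-- `ε^i_I = 1` if `|I ∩ {n-1, n}| = i`, and `0` otherwise. -/
def epsI (n : ℕ) (I : Finset ℕ) (i : ℕ) : ℕ :=
  if (I ∩ {n - 1, n}).card = i then 1 else 0

/-- The integer lattice of `Spin(2n)`: integer vectors with even coordinate sum. -/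
def JSpin (n : ℕ) : Set (Fin n → ℝ) :=
  {v | ∃ a : Fin n → ℤ, (∀ j, v j = a j) ∧ Even (∑ j, a j)}

/-- The set of `I`-canonical elements for a lattice `𝔏 ⊆ ℝ^n`. -/
def ICanonSet (n : ℕ) (𝔏 : Set (Fin n → ℝ)) (H : ℕ → Fin n → ℝ) (I : Finset ℕ) :
    Set (Fin n → ℝ) :=
  {ξ | ∃ c : ℕ → ℕ, (∀ i ∈ I, 1 ≤ c i) ∧ ξ = ∑ i ∈ I, c i • H i ∧ ξ ∈ 𝔏 ∧
    ∀ c' : ℕ → ℕ, (∀ i ∈ I, 1 ≤ c' i ∧ c' i ≤ c i) →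
      (∑ i ∈ I, c' i • H i) ∈ 𝔏 → (∑ i ∈ I, c' i • H i) = ξ}

/-- `δ_I(m)`. -/
def deltaI (I : Finset ℕ) (m : ℕ) : ℕ := if m ∈ I then 1 else 0

/-- Highest weights of the representations of `Spin(2n)` descending to
`Spin(2n)/{1,w}`: `λ_1 ≥ … ≥ λ_{n-1} ≥ |λ_n|`, all `λ_i` integers or all
half-integers, and `λ_1 + ⋯ + λ_n` an even integer. -/
def IsWWeight (n : ℕ) (lam : Fin n → ℝ) : Prop :=
  (∀ j k : Fin n, (j : ℕ) ≤ (k : ℕ) → (k : ℕ) + 2 ≤ n → lam k ≤ lam j) ∧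
  (∀ j k : Fin n, (j : ℕ) + 2 ≤ n → (k : ℕ) + 1 = n → |lam k| ≤ lam j) ∧
  ((∀ j, ∃ m : ℤ, lam j = m) ∨ (∀ j, ∃ m : ℤ, lam j = m + 1 / 2)) ∧
  (∃ m : ℤ, ∑ j, lam j = 2 * m)

/-- The integer lattice of `Spin(2n)/{1,w}`: the vectors pairing integrally with all
highest weights of representations of `Spin(2n)` descending to the quotient. -/
def Jw (n : ℕ) : Set (Fin n → ℝ) :=
  {ξ | ∀ lam : Fin n → ℝ, IsWWeight n lam → ∃ m : ℤ, ∑ j, lam j * ξ j = m}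


namespace SpinAux

variable (n : ℕ) (I : Finset ℕ)

def I0 : Finset ℕ := I ∩ Finset.Icc 1 (n - 2)

def Sval (c : ℕ → ℕ) : ℕ := ∑ i ∈ I0 n I, i * c i
def Aval (c : ℕ → ℕ) : ℕ := if n - 1 ∈ I then c (n - 1) else 0
def Bval (c : ℕ → ℕ) : ℕ := if n ∈ I then c n else 0

variable {n I}

lemma mem_I0 {i : ℕ} : i ∈ I0 n I ↔ i ∈ I ∧ 1 ≤ i ∧ i ≤ n - 2 := by
  simp [I0, Finset.mem_inter, Finset.mem_Icc]

lemma split_sum (hn : 4 ≤ n) (hI : I ⊆ Finset.Icc 1 n) {M : Type*} [AddCommMonoid M]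
    (g : ℕ → M) :
    ∑ i ∈ I, g i = (∑ i ∈ I0 n I, g i)
      + ((if n - 1 ∈ I then g (n-1) else 0) + (if n ∈ I then g n else 0)) := by
  have hIu : I = I0 n I ∪ (I ∩ {n-1, n}) := by
    ext i
    simp only [Finset.mem_union, mem_I0, Finset.mem_inter, Finset.mem_insert,
      Finset.mem_singleton]
    constructor
    · intro hi
      have h2 := Finset.mem_Icc.mp (hI hi)
      by_cases h : i ≤ n - 2
      · exact Or.inl ⟨hi, h2.1, h⟩
      · exact Or.inr ⟨hi, by omega⟩
    · rintro (⟨h, _⟩ | ⟨h, _⟩) <;> exact h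
  have hdisj : Disjoint (I0 n I) (I ∩ {n-1, n}) := by
    rw [Finset.disjoint_left]
    intro i h1 h2
    rw [mem_I0] at h1
    simp only [Finset.mem_inter, Finset.mem_insert, Finset.mem_singleton] at h2
    omega
  conv_lhs => rw [hIu]
  rw [Finset.sum_union hdisj]
  congr 1
  have h2 : I ∩ ({n-1, n} : Finset ℕ) = ({n-1, n} : Finset ℕ).filter (· ∈ I) := by
    rw [Finset.filter_mem_eq_inter, Finset.inter_comm]
  rw [h2, Finset.sum_filter, Finset.sum_pair (show n - 1 ≠ n by omega)]




lemma Hso_low (h1 : 2 ≤ n) {i : ℕ} (h2 : i ≤ n - 2) :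
    Hso n i = fun j : Fin n => if (j : ℕ) + 1 ≤ i then (1:ℝ) else 0 := by
  have e1 : i ≠ n - 1 := by omega
  have e2 : i ≠ n := by omega
  unfold Hso; rw [if_neg e1, if_neg e2]

lemma Hso_n1 : Hso n (n-1) = fun j : Fin n => if (j:ℕ)+2 ≤ n then (1:ℝ)/2 else -(1/2) := by
  unfold Hso; rw [if_pos rfl]

lemma Hso_n (h1 : 2 ≤ n) : Hso n n = fun _ => (1:ℝ)/2 := by
  unfold Hso; rw [if_neg (by omega), if_pos rfl]

lemma pair_sum (c : ℕ → ℕ) (lam : Fin n → ℝ) :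
    ∑ j, lam j * (∑ i ∈ I, c i • Hso n i) j
      = ∑ i ∈ I, (c i : ℝ) * (∑ j, lam j * Hso n i j) := by
  have h1 : ∀ j : Fin n, (∑ i ∈ I, c i • Hso n i) j = ∑ i ∈ I, (c i : ℝ) * Hso n i j := by
    intro j
    rw [Finset.sum_apply]
    exact Finset.sum_congr rfl fun i _ => by simp [nsmul_eq_mul]
  calc ∑ j, lam j * (∑ i ∈ I, c i • Hso n i) j
      = ∑ j, ∑ i ∈ I, (c i : ℝ) * (lam j * Hso n i j) := by
        refine Finset.sum_congr rfl fun j _ => ?_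
        rw [h1, Finset.mul_sum]
        exact Finset.sum_congr rfl fun i _ => by ring
    _ = ∑ i ∈ I, ∑ j, (c i : ℝ) * (lam j * Hso n i j) := Finset.sum_comm
    _ = ∑ i ∈ I, (c i : ℝ) * (∑ j, lam j * Hso n i j) := by
        exact Finset.sum_congr rfl fun i _ => by rw [Finset.mul_sum]

lemma T_low (h1 : 2 ≤ n) {i : ℕ} (h2 : i ≤ n - 2) (lam : Fin n → ℝ) :
    ∑ j, lam j * Hso n i j = ∑ j : Fin n, (if (j:ℕ) < i then lam j else 0) := by
  simp only [Hso_low h1 h2]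
  refine Finset.sum_congr rfl fun j _ => ?_
  by_cases h : (j:ℕ) + 1 ≤ i
  · rw [if_pos h, if_pos (by omega), mul_one]
  · rw [if_neg h, if_neg (by omega), mul_zero]

lemma T_n (h1 : 2 ≤ n) (lam : Fin n → ℝ) :
    ∑ j, lam j * Hso n n j = (∑ j, lam j) / 2 := by
  rw [Hso_n h1, Finset.sum_div]
  exact Finset.sum_congr rfl fun j _ => by ring

lemma T_n1 (h1 : 2 ≤ n) (lam : Fin n → ℝ) :
    ∑ j, lam j * Hso n (n-1) j = (∑ j, lam j) / 2 - lam ⟨n-1, by omega⟩ := by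
  rw [Hso_n1]
  have : ∀ j : Fin n, lam j * (if (j:ℕ)+2 ≤ n then (1:ℝ)/2 else -(1/2))
      = lam j / 2 - (if j = (⟨n-1, by omega⟩ : Fin n) then lam j else 0) := by
    intro j
    by_cases h : (j:ℕ) + 2 ≤ n
    · rw [if_pos h, if_neg (fun he => by rw [he] at h; simp at h; omega)]
      ring
    · have hj : (j:ℕ) = n - 1 := by have := j.isLt; omega
      rw [if_neg h, if_pos (Fin.ext hj)]
      ring
  rw [Finset.sum_congr rfl fun j _ => this j, Finset.sum_sub_distrib,
    Finset.sum_ite_eq' Finset.univ _ lam, if_pos (Finset.mem_univ _), Finset.sum_div]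

lemma sum_ite_lt (i : ℕ) (h : i ≤ n) (f : ℕ → ℝ) :
    ∑ j : Fin n, (if (j:ℕ) < i then f (j:ℕ) else 0) = ∑ j ∈ Finset.range i, f j := by
  rw [Fin.sum_univ_eq_sum_range (fun j => if j < i then f j else 0) n, ← Finset.sum_filter]
  congr 1
  ext j
  simp only [Finset.mem_filter, Finset.mem_range]
  omega




lemma exists_int_sum {f : ℕ → ℝ} (h : ∀ i ∈ I, ∃ p : ℤ, f i = p) :
    ∃ q : ℤ, ∑ i ∈ I, f i = q := by
  have h2 : ∀ i : ℕ, ∃ p : ℤ, (i ∈ I → f i = p) := by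
    intro i; by_cases hi : i ∈ I
    · exact (h i hi).imp fun p hp _ => hp
    · exact ⟨0, fun hi' => absurd hi' hi⟩
  choose p hp using h2
  refine ⟨∑ i ∈ I, p i, ?_⟩
  push_cast
  exact Finset.sum_congr rfl fun i hi => hp i hi

lemma pairing_int (hn : 4 ≤ n) (hI : I ⊆ Finset.Icc 1 n) (c : ℕ → ℕ)
    (lam : Fin n → ℝ) (a : Fin n → ℤ) (ha : ∀ j, lam j = a j)
    (m : ℤ) (hm : ∑ j, lam j = 2*m) :
    ∃ q : ℤ, ∑ j, lam j * (∑ i ∈ I, c i • Hso n i) j = q := by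
  rw [pair_sum]
  refine exists_int_sum fun i hi => ?_
  have hIcc := Finset.mem_Icc.mp (hI hi)
  by_cases h2 : i ≤ n - 2
  · refine ⟨(c i : ℤ) * ∑ j : Fin n, (if (j:ℕ) < i then a j else 0), ?_⟩
    rw [T_low (by omega) h2]
    have : ∀ j : Fin n, (if (j:ℕ) < i then lam j else 0)
        = (if (j:ℕ) < i then ((a j : ℤ) : ℝ) else 0) := by
      intro j; by_cases h : (j:ℕ) < i <;> simp [h, ha j]
    rw [Finset.sum_congr rfl fun j _ => this j]
    push_cast [apply_ite (fun z : ℤ => (z : ℝ))]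
    ring
  · by_cases h3 : i = n - 1
    · subst h3
      refine ⟨(c (n-1) : ℤ) * (m - a ⟨n-1, by omega⟩), ?_⟩
      rw [T_n1 (by omega), hm]
      simp only [ha]
      push_cast
      ring
    · have h4 : i = n := by omega
      refine ⟨(c i : ℤ) * m, ?_⟩
      rw [h4, T_n (by omega), hm]
      push_cast
      ring

lemma pairing_half (hn : 4 ≤ n) (hI : I ⊆ Finset.Icc 1 n) (c : ℕ → ℕ)
    (lam : Fin n → ℝ) (a : Fin n → ℤ) (ha : ∀ j, lam j = a j + 1/2)
    (m : ℤ) (hm : ∑ j, lam j = 2*m) :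
    ∃ q : ℤ, ∑ j, lam j * (∑ i ∈ I, c i • Hso n i) j
      = q + ((Sval n I c : ℝ) - (Aval n I c : ℝ)) / 2 := by
  classical
  set P : ℕ → ℤ := fun i => ∑ j : Fin n, (if (j:ℕ) < i then a j else 0) with hP
  have hT0 : ∀ i ∈ I0 n I, (c i:ℝ) * (∑ j, lam j * Hso n i j)
      = ((c i * P i : ℤ) : ℝ) + ((i * c i : ℕ) : ℝ) / 2 := by
    intro i hi
    rw [mem_I0] at hi
    rw [T_low (by omega) hi.2.2]
    have hsplit : ∀ j : Fin n, (if (j:ℕ) < i then lam j else 0)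
        = (if (j:ℕ) < i then ((a j : ℤ) : ℝ) else 0) + (if (j:ℕ) < i then (1:ℝ)/2 else 0) := by
      intro j; by_cases h : (j:ℕ) < i <;> simp [h, ha j]
    rw [Finset.sum_congr rfl fun j _ => hsplit j, Finset.sum_add_distrib]
    have e1 : ∑ j : Fin n, (if (j:ℕ) < i then ((a j : ℤ) : ℝ) else 0) = ((P i : ℤ) : ℝ) := by
      rw [hP]
      push_cast [apply_ite (fun z : ℤ => (z : ℝ))]
      ring
    have e2 : ∑ j : Fin n, (if (j:ℕ) < i then (1:ℝ)/2 else 0) = (i:ℝ)/2 := by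
      rw [sum_ite_lt i (by omega) (fun _ => (1:ℝ)/2), Finset.sum_const, Finset.card_range,
        nsmul_eq_mul]
      ring
    rw [e1, e2]
    push_cast
    ring
  rw [pair_sum, split_sum hn hI]
  refine ⟨(∑ i ∈ I0 n I, (c i : ℤ) * P i)
    + ((if n-1 ∈ I then (c (n-1) : ℤ) * (m - a ⟨n-1, by omega⟩) else 0)
    + (if n ∈ I then (c n : ℤ) * m else 0)), ?_⟩
  have hg1 : ∑ i ∈ I0 n I, (c i : ℝ) * (∑ j, lam j * Hso n i j)
      = ((∑ i ∈ I0 n I, (c i : ℤ) * P i : ℤ) : ℝ) + ((Sval n I c : ℕ) : ℝ) / 2 := by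
    rw [Finset.sum_congr rfl hT0, Finset.sum_add_distrib, ← Finset.sum_div]
    unfold Sval
    push_cast
    ring
  have hg2 : (if n - 1 ∈ I then (c (n-1) : ℝ) * (∑ j, lam j * Hso n (n-1) j) else 0)
      = ((if n-1 ∈ I then (c (n-1) : ℤ) * (m - a ⟨n-1, by omega⟩) else 0 : ℤ) : ℝ)
        - ((Aval n I c : ℕ) : ℝ) / 2 := by
    unfold Aval
    split_ifs with h
    · rw [T_n1 (by omega), hm]
      simp only [ha]
      push_cast
      ring
    · simp
  have hg3 : (if n ∈ I then (c n : ℝ) * (∑ j, lam j * Hso n n j) else 0)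
      = ((if n ∈ I then (c n : ℤ) * m else 0 : ℤ) : ℝ) := by
    split_ifs with h
    · rw [T_n (by omega), hm]; push_cast; ring
    · simp
  rw [hg1, hg2, hg3]
  push_cast
  ring



lemma mem_Jw_iff (hn : 4 ≤ n) (hnev : Even n) (hI : I ⊆ Finset.Icc 1 n) (c : ℕ → ℕ) :
    (∑ i ∈ I, c i • Hso n i) ∈ Jw n ↔ Even (Sval n I c + Aval n I c) := by
  constructor
  · intro h
    have hfin : ∀ (lam : Fin n → ℝ) (a : Fin n → ℤ), (∀ j, lam j = a j + 1/2) →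
        ∀ t : ℤ, (∑ j, lam j = 2*t) → IsWWeight n lam → Even (Sval n I c + Aval n I c) := by
      intro lam a ha t hsum hw
      obtain ⟨m', hm'⟩ := h lam hw
      obtain ⟨q, hq⟩ := pairing_half hn hI c lam a ha t hsum
      rw [hm'] at hq
      have key : (Sval n I c : ℝ) - (Aval n I c : ℝ) = 2*((m':ℝ) - q) := by linarith
      have keyZ : (Sval n I c : ℤ) - (Aval n I c : ℤ) = 2*(m' - q) := by exact_mod_cast key
      rw [Nat.even_iff]
      omega
    rcases Nat.even_or_odd (n/2) with hE | hO
    · obtain ⟨t, ht⟩ := hE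
      have hn4 : n = 4*t := by
        have := Nat.even_iff.mp hnev; omega
      have hsum : ∑ j : Fin n, (1:ℝ)/2 = 2*(t:ℤ) := by
        rw [Finset.sum_const, Finset.card_univ, Fintype.card_fin, nsmul_eq_mul, hn4]
        push_cast
        ring
      refine hfin (fun _ => 1/2) (fun _ => 0) (fun j => by norm_num) t hsum
        ⟨fun j k _ _ => le_rfl, fun j k _ _ => by rw [abs_of_pos (by norm_num : (0:ℝ) < 1/2)], Or.inr fun j => ⟨0, by norm_num⟩,
          ⟨t, by push_cast at hsum ⊢; exact hsum⟩⟩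
    · obtain ⟨t, ht⟩ := hO
      have hn4 : n = 4*t + 2 := by
        have := Nat.even_iff.mp hnev; omega
      set lam : Fin n → ℝ := fun j => if (j:ℕ)+1 = n then -(1/2 : ℝ) else 1/2 with hlam
      have hstep : ∀ j : Fin n, lam j = 1/2 - (if j = (⟨n-1, by omega⟩ : Fin n) then (1:ℝ) else 0) := by
        intro j
        simp only [hlam]
        by_cases hj : (j:ℕ)+1 = n
        · rw [if_pos hj, if_pos (Fin.ext (by simp; omega))]
          norm_num
        · rw [if_neg hj, if_neg (fun he => hj (by rw [he]; simp; omega))]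
          norm_num
      have hsum : ∑ j, lam j = 2*(t:ℤ) := by
        rw [Finset.sum_congr rfl fun j _ => hstep j, Finset.sum_sub_distrib, Finset.sum_const,
          Finset.card_univ, Fintype.card_fin, nsmul_eq_mul,
          Finset.sum_ite_eq' Finset.univ _ (fun _ => (1:ℝ)), if_pos (Finset.mem_univ _), hn4]
        push_cast
        ring
      have ha : ∀ j, lam j = (if (j:ℕ)+1 = n then (-1 : ℤ) else 0) + 1/2 := by
        intro j
        simp only [hlam]
        by_cases hj : (j:ℕ)+1 = n <;> simp [hj] <;> norm_num
      have hw : IsWWeight n lam := by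
        refine ⟨?_, ?_, Or.inr fun j => ⟨_, ha j⟩, ⟨t, hsum⟩⟩
        · intro j k hjk hk2
          simp only [hlam]
          have h1 : ¬((k:ℕ)+1 = n) := by omega
          have h2 : ¬((j:ℕ)+1 = n) := by omega
          rw [if_neg h1, if_neg h2]
        · intro j k hj2 hk1
          simp only [hlam]
          rw [if_pos hk1, if_neg (by omega)]
          rw [abs_neg, abs_of_pos (by norm_num : (0:ℝ) < 1/2)]
      exact hfin lam _ ha t hsum hw
  · intro hev lam hlam
    obtain ⟨-, -, hint, m, hm⟩ := hlam
    rcases hint with hi | hh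
    · choose a ha using hi
      exact pairing_int hn hI c lam a ha m hm
    · choose a ha using hh
      obtain ⟨q, hq⟩ := pairing_half hn hI c lam a ha m hm
      obtain ⟨k, hk⟩ := hev
      refine ⟨q + k - Aval n I c, ?_⟩
      rw [hq]
      have hS : (Sval n I c : ℝ) = (k:ℝ) + k - Aval n I c := by
        have := congrArg (fun x : ℕ => (x:ℝ)) hk
        push_cast at this
        linarith
      rw [hS]
      push_cast
      ring

lemma Xi_apply (hn : 4 ≤ n) (hI : I ⊆ Finset.Icc 1 n) (c : ℕ → ℕ) (j : Fin n) :
    (∑ i ∈ I, c i • Hso n i) j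
      = (∑ i ∈ I0 n I, (if (j:ℕ) + 1 ≤ i then (c i:ℝ) else 0))
        + ((Aval n I c : ℝ) * (if (j:ℕ)+2 ≤ n then (1:ℝ)/2 else -(1/2))
          + (Bval n I c : ℝ) * (1/2)) := by
  rw [Finset.sum_apply]
  have h1 : ∀ i ∈ I, (c i • Hso n i) j = (c i : ℝ) * Hso n i j := by
    intro i _
    simp [nsmul_eq_mul]
  rw [Finset.sum_congr rfl h1, split_sum hn hI (g := fun i => (c i : ℝ) * Hso n i j)]
  congr 1
  · refine Finset.sum_congr rfl fun i hi => ?_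
    rw [mem_I0] at hi
    simp only [Hso_low (show 2 ≤ n by omega) hi.2.2]
    split_ifs <;> simp
  · congr 1
    · unfold Aval
      by_cases h : n - 1 ∈ I
      · rw [if_pos h, if_pos h, Hso_n1]
      · rw [if_neg h, if_neg h]
        simp
    · unfold Bval
      by_cases h : n ∈ I
      · rw [if_pos h, if_pos h, Hso_n (show 2 ≤ n by omega)]
      · rw [if_neg h, if_neg h]
        simp

lemma inj_on (hn : 4 ≤ n) (hI : I ⊆ Finset.Icc 1 n) {c c' : ℕ → ℕ}
    (h : (∑ i ∈ I, c i • Hso n i) = ∑ i ∈ I, c' i • Hso n i) : ∀ i ∈ I, c i = c' i := by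
  have cA := congrFun h ⟨n-2, by omega⟩
  have cB := congrFun h ⟨n-1, by omega⟩
  rw [Xi_apply hn hI c, Xi_apply hn hI c'] at cA cB
  have z1 : ∀ (d : ℕ → ℕ), ∑ i ∈ I0 n I, (if ((⟨n-2, by omega⟩ : Fin n):ℕ) + 1 ≤ i then (d i:ℝ) else 0) = 0 := by
    intro d
    refine Finset.sum_eq_zero fun i hi => ?_
    rw [mem_I0] at hi
    rw [if_neg (by simp; omega)]
  have z2 : ∀ (d : ℕ → ℕ), ∑ i ∈ I0 n I, (if ((⟨n-1, by omega⟩ : Fin n):ℕ) + 1 ≤ i then (d i:ℝ) else 0) = 0 := by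
    intro d
    refine Finset.sum_eq_zero fun i hi => ?_
    rw [mem_I0] at hi
    rw [if_neg (by simp; omega)]
  rw [z1 c, z1 c', if_pos (by simp; omega : ((⟨n-2, by omega⟩ : Fin n):ℕ) + 2 ≤ n)] at cA
  rw [z2 c, z2 c', if_neg (by simp; omega : ¬ ((⟨n-1, by omega⟩ : Fin n):ℕ) + 2 ≤ n)] at cB
  have hA : (Aval n I c : ℝ) = Aval n I c' := by linarith
  have hB : (Bval n I c : ℝ) = Bval n I c' := by linarith
  intro i hi
  have hIcc := Finset.mem_Icc.mp (hI hi)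
  by_cases h2 : i ≤ n - 2
  · have hi0 : i ∈ I0 n I := mem_I0.mpr ⟨hi, hIcc.1, h2⟩
    have c1 := congrFun h ⟨i-1, by omega⟩
    have c2 := congrFun h ⟨i, by omega⟩
    rw [Xi_apply hn hI c, Xi_apply hn hI c'] at c1 c2
    rw [if_pos (by simp; omega : ((⟨i-1, by omega⟩ : Fin n):ℕ) + 2 ≤ n)] at c1
    rw [if_pos (by simp; omega : ((⟨i, by omega⟩ : Fin n):ℕ) + 2 ≤ n)] at c2
    have key : ∀ (d : ℕ → ℕ),
        (∑ t ∈ I0 n I, (if ((⟨i-1, by omega⟩ : Fin n):ℕ) + 1 ≤ t then (d t:ℝ) else 0))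
        - (∑ t ∈ I0 n I, (if ((⟨i, by omega⟩ : Fin n):ℕ) + 1 ≤ t then (d t:ℝ) else 0))
        = (d i : ℝ) := by
      intro d
      rw [← Finset.sum_sub_distrib]
      have step : ∀ t ∈ I0 n I,
          (if ((⟨i-1, by omega⟩ : Fin n):ℕ) + 1 ≤ t then (d t:ℝ) else 0)
          - (if ((⟨i, by omega⟩ : Fin n):ℕ) + 1 ≤ t then (d t:ℝ) else 0)
          = (if t = i then (d t:ℝ) else 0) := by
        intro t ht
        rw [mem_I0] at ht
        simp only [Fin.val_mk]
        by_cases u : t = i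
        · subst u
          rw [if_pos (by omega), if_neg (by omega), if_pos rfl]
          ring
        · by_cases v : t < i
          · rw [if_neg (by omega), if_neg (by omega), if_neg u]
            ring
          · rw [if_pos (by omega), if_pos (by omega), if_neg u]
            ring
      rw [Finset.sum_congr rfl step, Finset.sum_ite_eq' (I0 n I) i (fun t => (d t : ℝ)),
        if_pos hi0]
    have e1 := key c
    have e2 := key c'
    have : (c i : ℝ) = (c' i : ℝ) := by linarith [c1, c2, e1, e2]
    exact_mod_cast this
  · by_cases h3 : i = n - 1
    · subst h3
      have : (c (n-1) : ℝ) = (c' (n-1) : ℝ) := by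
        unfold Aval at hA
        rw [if_pos hi, if_pos hi] at hA
        exact hA
      exact_mod_cast this
    · have h4 : i = n := by omega
      have : (c i : ℝ) = (c' i : ℝ) := by
        unfold Bval at hB
        rw [h4] at hi ⊢
        rw [if_pos hi, if_pos hi] at hB
        exact hB
      exact_mod_cast this

lemma Sval_all_one {c : ℕ → ℕ} (h : ∀ i ∈ I0 n I, c i = 1) :
    Sval n I c = ∑ i ∈ I0 n I, i :=
  Finset.sum_congr rfl fun i hi => by rw [h i hi, mul_one]

lemma Sval_one_except {c : ℕ → ℕ} {j : ℕ} (hj : j ∈ I0 n I)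
    (h : ∀ i ∈ I0 n I, i ≠ j → c i = 1) :
    Sval n I c + j = (∑ i ∈ I0 n I, i) + j * c j := by
  unfold Sval
  rw [← Finset.add_sum_erase _ _ hj, ← Finset.add_sum_erase _ (fun i => i) hj]
  have he : ∑ i ∈ (I0 n I).erase j, i * c i = ∑ i ∈ (I0 n I).erase j, i :=
    Finset.sum_congr rfl fun i hi => by
      rw [h i (Finset.mem_of_mem_erase hi) (Finset.ne_of_mem_erase hi), mul_one]
  rw [he]
  ring

lemma Aval_one_except {c : ℕ → ℕ} {j : ℕ} (hj : j ≠ n - 1)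
    (h : ∀ i ∈ I, i ≠ j → c i = 1) :
    Aval n I c = if n - 1 ∈ I then 1 else 0 := by
  unfold Aval
  split_ifs with h2
  · rw [h (n-1) h2 (Ne.symm hj)]
  · rfl

lemma sum_smul_all_one {c : ℕ → ℕ} (h : ∀ i ∈ I, c i = 1) :
    ∑ i ∈ I, c i • Hso n i = ∑ i ∈ I, Hso n i :=
  Finset.sum_congr rfl fun i hi => by rw [h i hi, one_smul]

lemma sum_smul_one_except {c : ℕ → ℕ} {j : ℕ} (hj : j ∈ I) (hc : c j = 2)
    (h : ∀ i ∈ I, i ≠ j → c i = 1) :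
    ∑ i ∈ I, c i • Hso n i = (∑ i ∈ I, Hso n i) + Hso n j := by
  rw [← Finset.add_sum_erase _ _ hj, ← Finset.add_sum_erase _ (fun i => Hso n i) hj, hc]
  have he : ∑ i ∈ I.erase j, c i • Hso n i = ∑ i ∈ I.erase j, Hso n i :=
    Finset.sum_congr rfl fun i hi => by
      rw [h i (Finset.mem_of_mem_erase hi) (Finset.ne_of_mem_erase hi), one_smul]
  rw [he, two_smul]
  abel

lemma Sval_update_mem {c : ℕ → ℕ} {j v : ℕ} (hj : j ∈ I0 n I) :
    Sval n I (Function.update c j v) + j * c j = Sval n I c + j * v := by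
  unfold Sval
  rw [← Finset.add_sum_erase _ _ hj, ← Finset.add_sum_erase _ (fun i => i * c i) hj,
    Function.update_self]
  have he : ∑ i ∈ (I0 n I).erase j, i * Function.update c j v i
      = ∑ i ∈ (I0 n I).erase j, i * c i :=
    Finset.sum_congr rfl fun i hi => by
      rw [Function.update_of_ne (Finset.ne_of_mem_erase hi)]
  rw [he]
  ring

lemma Sval_update_not {c : ℕ → ℕ} {j v : ℕ} (hj : j ∉ I0 n I) :
    Sval n I (Function.update c j v) = Sval n I c :=
  Finset.sum_congr rfl fun i hi => by
    rw [Function.update_of_ne (by rintro rfl; exact hj hi)]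

lemma Aval_update_ne {c : ℕ → ℕ} {j v : ℕ} (hj : j ≠ n - 1) :
    Aval n I (Function.update c j v) = Aval n I c := by
  unfold Aval
  split_ifs with h
  · rw [Function.update_of_ne (Ne.symm hj)]
  · rfl

lemma Aval_update_eq {c : ℕ → ℕ} {v : ℕ} (h : n - 1 ∈ I) :
    Aval n I (Function.update c (n-1) v) = v := by
  unfold Aval
  rw [if_pos h, Function.update_self]

lemma Aval_eq_delta_mul {c : ℕ → ℕ} (h : n - 1 ∈ I → c (n-1) = 1) :
    Aval n I c = deltaI I (n-1) := by
  unfold Aval deltaI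
  split_ifs with h2
  · rw [h h2]
  · rfl

lemma card_inter_pair (hn : 4 ≤ n) :
    (I ∩ {n-1, n}).card
      = (if n - 1 ∈ I then 1 else 0) + (if n ∈ I then 1 else 0) := by
  rw [Finset.inter_comm, ← Finset.filter_mem_eq_inter]
  rw [show ({n-1, n} : Finset ℕ) = insert (n-1) {n} from rfl, Finset.filter_insert,
    Finset.filter_singleton]
  have hne : (n-1 : ℕ) ≠ n := by omega
  by_cases h1 : n - 1 ∈ I <;> by_cases h2 : n ∈ I <;>
    simp [h1, h2, Finset.card_insert_of_notMem, hne]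

lemma canon_of (hn : 4 ≤ n) (hnev : Even n) (hI : I ⊆ Finset.Icc 1 n) (c : ℕ → ℕ)
    (h1 : ∀ i ∈ I, 1 ≤ c i)
    (hfeas : Even (Sval n I c + Aval n I c))
    (huniq : ∀ c' : ℕ → ℕ, (∀ i ∈ I, 1 ≤ c' i ∧ c' i ≤ c i) →
        Even (Sval n I c' + Aval n I c') → ∀ i ∈ I, c' i = c i) :
    (∑ i ∈ I, c i • Hso n i) ∈ ICanonSet n (Jw n) (Hso n) I := by
  refine ⟨c, h1, rfl, (mem_Jw_iff hn hnev hI c).mpr hfeas, ?_⟩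
  intro c' hc' hmem'
  have hcc := huniq c' hc' ((mem_Jw_iff hn hnev hI c').mp hmem')
  exact Finset.sum_congr rfl fun i hi => by rw [hcc i hi]

end SpinAux

open SpinAux in
theorem spin_even_quotient_w_canonical (n : ℕ) (hn : 4 ≤ n) (hneven : Even n)
    (I : Finset ℕ) (hI : I ⊆ Finset.Icc 1 n) (hne : I.Nonempty) :
    ICanonSet n (Jw n) (Hso n) I =
      {ξ | (Even (∑ i ∈ I ∩ Finset.Icc 1 (n - 2), i) ∧
              (ξ = (∑ i ∈ I, Hso n i) + deltaI I (n - 1) • Hso n (n - 1) ∨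
               ∃ j : ℕ, (deltaI I (n - 1) ≠ 0 → j ∈ I ∩ Finset.Icc 1 (n - 2) ∧ Odd j) ∧
                 ξ = (∑ i ∈ I, Hso n i) + deltaI I (n - 1) • Hso n j)) ∨
           (Odd (∑ i ∈ I ∩ Finset.Icc 1 (n - 2), i) ∧
              (∃ j : ℕ,
                (epsI n I 0 ≠ 0 ∨ epsI n I 1 * deltaI I n ≠ 0 →
                  j ∈ I ∩ Finset.Icc 1 (n - 2) ∧ Odd j) ∧
                ξ = (∑ i ∈ I, Hso n i) + epsI n I 0 • Hso n j +
                      (epsI n I 1 * deltaI I n) • Hso n j))} := by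
  classical
  have hI0 : I ∩ Finset.Icc 1 (n-2) = I0 n I := rfl
  ext ξ
  simp only [Set.mem_setOf_eq]
  rw [hI0]
  set p := ∑ i ∈ I0 n I, i with hpdef
  -- helper canonical constructions
  have canon_one : Even (p + deltaI I (n-1)) →
      (∑ i ∈ I, Hso n i) ∈ ICanonSet n (Jw n) (Hso n) I := by
    intro hev
    have hS : Sval n I (fun _ => 1) = p := Sval_all_one (fun _ _ => rfl)
    have hA : Aval n I (fun _ => 1) = deltaI I (n-1) := Aval_eq_delta_mul (fun _ => rfl)
    have hres := canon_of hn hneven hI (fun _ => 1) (fun _ _ => le_rfl)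
      (by rw [hS, hA]; exact hev)
      (by intro c' hc' _ i hi
          have hx : 1 ≤ c' i ∧ c' i ≤ 1 := hc' i hi
          show c' i = 1
          omega)
    rwa [sum_smul_all_one (fun _ _ => rfl)] at hres
  have canon_two : ∀ w, w ∈ I → (w = n-1 ∨ (w ∈ I0 n I ∧ Odd w)) →
      ¬ Even (p + deltaI I (n-1)) →
      ((∑ i ∈ I, Hso n i) + Hso n w) ∈ ICanonSet n (Jw n) (Hso n) I := by
    intro w hwI hwt hodd
    set c : ℕ → ℕ := fun i => if i = w then 2 else 1 with hc
    have hcw : c w = 2 := by rw [hc]; simp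
    have hcother : ∀ t, t ≠ w → c t = 1 := fun t ht => by rw [hc]; simp [ht]
    have hbound : ∀ i ∈ I, 1 ≤ c i := by
      intro i _
      by_cases e : i = w
      · subst e; rw [hcw]; omega
      · rw [hcother i e]
    have key : ∀ c' : ℕ → ℕ, (∀ t ∈ I, t ≠ w → c' t = 1) →
        (Even (Sval n I c' + Aval n I c') ↔ c' w = 2 ∨ (c' w % 2 = 0)) := by
      intro c' hone
      rcases hwt with hw1 | ⟨hw0, hwodd⟩
      · have hd : n - 1 ∈ I := hw1 ▸ hwI
        have hδ : deltaI I (n-1) = 1 := by simp [deltaI, hd]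
        rw [hδ] at hodd
        have hS' : Sval n I c' = p := Sval_all_one (fun i hi => by
          refine hone i (mem_I0.mp hi).1 ?_
          have := mem_I0.mp hi
          omega)
        have hA' : Aval n I c' = c' (n-1) := by unfold Aval; rw [if_pos hd]
        rw [hS', hA', ← hw1]
        rw [Nat.even_iff] at hodd ⊢
        constructor
        · intro h; right; omega
        · intro h; rcases h with h | h <;> omega
      · have hwne : w ≠ n - 1 := by have := mem_I0.mp hw0; omega
        have hδA : Aval n I c' = deltaI I (n-1) :=
          Aval_eq_delta_mul (fun h => hone _ h (Ne.symm hwne))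
        have hS' : Sval n I c' + w = p + w * c' w :=
          Sval_one_except hw0 (fun i hi hne => hone i (mem_I0.mp hi).1 hne)
        have hwodd' : w % 2 = 1 := Nat.odd_iff.mp hwodd
        rw [hδA]
        rw [Nat.even_iff] at hodd ⊢
        constructor
        · intro h
          right
          rcases Nat.even_or_odd (c' w) with he | ho
          · exact Nat.even_iff.mp he
          · exfalso
            have ho' := Nat.odd_iff.mp ho
            have hml : w * c' w % 2 = 1 := by
              simp [Nat.mul_mod, hwodd', ho']
            omega
        · intro h
          have h2 : c' w % 2 = 0 := by
            rcases h with h | h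
            · omega
            · exact h
          have hml : w * c' w % 2 = 0 := by
            simp [Nat.mul_mod, h2]
          omega
    have hfeas : Even (Sval n I c + Aval n I c) := by
      rw [key c (fun t _ ht => hcother t ht)]
      left; exact hcw
    have huniq : ∀ c' : ℕ → ℕ, (∀ i ∈ I, 1 ≤ c' i ∧ c' i ≤ c i) →
        Even (Sval n I c' + Aval n I c') → ∀ i ∈ I, c' i = c i := by
      intro c' hc' hev i hi
      have hone : ∀ t ∈ I, t ≠ w → c' t = 1 := by
        intro t ht htw
        have := hc' t ht
        rw [hcother t htw] at this
        omega
      by_cases e : i = w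
      · subst e
        rw [key c' hone] at hev
        have hb := hc' i hi
        rw [hcw] at hb ⊢
        rcases hev with h | h
        · exact h
        · omega
      · rw [hone i hi e, hcother i e]
    have hres := canon_of hn hneven hI c hbound hfeas huniq
    rwa [sum_smul_one_except hwI hcw (fun t _ ht => hcother t ht)] at hres
  constructor
  · rintro ⟨c, h1, rfl, hmem, hmin⟩
    have hfeas := (mem_Jw_iff hn hneven hI c).mp hmem
    have hb : ∀ i ∈ I, c i ≤ 2 := by
      intro i hi
      by_contra hgt
      push_neg at hgt
      have hIcc := Finset.mem_Icc.mp (hI hi)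
      set c' := Function.update c i (c i - 2) with hc'
      have hupd : ∀ t ∈ I, 1 ≤ c' t ∧ c' t ≤ c t := by
        intro t ht
        by_cases e : t = i
        · subst e; rw [hc', Function.update_self]; omega
        · rw [hc', Function.update_of_ne e]; exact ⟨h1 t ht, le_rfl⟩
      have hfeas' : Even (Sval n I c' + Aval n I c') := by
        by_cases hi0 : i ∈ I0 n I
        · have e1 := Sval_update_mem (c := c) (j := i) (v := c i - 2) hi0
          rw [← hc'] at e1
          have e2 : Aval n I c' = Aval n I c := by
            rw [hc']; exact Aval_update_ne (by have := mem_I0.mp hi0; omega)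
          have e3 : i * c i = i * (c i - 2) + (i + i) := by
            calc i * c i = i * (c i - 2 + 2) := by rw [Nat.sub_add_cancel (by omega)]
            _ = i * (c i - 2) + (i + i) := by ring
          have e1' : Sval n I c' + (i * (c i - 2) + (i + i)) = Sval n I c + i * (c i - 2) := by
            rw [← e3]; exact e1
          rw [Nat.even_iff] at hfeas ⊢
          rw [e2]
          set X := i * (c i - 2)
          omega
        · have e1 : Sval n I c' = Sval n I c := by rw [hc']; exact Sval_update_not hi0
          by_cases hn1 : i = n - 1
          · have hA : n - 1 ∈ I := hn1 ▸ hi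
            have e2 : Aval n I c' = c i - 2 := by rw [hc', hn1]; exact Aval_update_eq hA
            have e3 : Aval n I c = c i := by unfold Aval; rw [if_pos hA, hn1]
            rw [Nat.even_iff] at hfeas ⊢
            rw [e1, e2]
            rw [e3] at hfeas
            omega
          · have e2 : Aval n I c' = Aval n I c := by rw [hc']; exact Aval_update_ne hn1
            rw [e1, e2]; exact hfeas
      have heq := hmin c' hupd ((mem_Jw_iff hn hneven hI c').mpr hfeas')
      have hci := inj_on hn hI heq i hi
      rw [hc', Function.update_self] at hci
      omega
    have h2' : ∀ i ∈ I, c i = 2 → i = n - 1 ∨ (i ∈ I0 n I ∧ Odd i) := by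
      intro i hi hc2
      by_contra hcon
      push_neg at hcon
      obtain ⟨hne1, hno⟩ := hcon
      have hIcc := Finset.mem_Icc.mp (hI hi)
      set c' := Function.update c i 1 with hc'
      have hupd : ∀ t ∈ I, 1 ≤ c' t ∧ c' t ≤ c t := by
        intro t ht
        by_cases e : t = i
        · subst e; rw [hc', Function.update_self]; omega
        · rw [hc', Function.update_of_ne e]; exact ⟨h1 t ht, le_rfl⟩
      have hfeas' : Even (Sval n I c' + Aval n I c') := by
        by_cases hi0 : i ∈ I0 n I
        · have hnodd : ¬ Odd i := fun h => hno hi0 h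
          rw [Nat.odd_iff] at hnodd
          have e1 := Sval_update_mem (c := c) (j := i) (v := 1) hi0
          rw [← hc', hc2] at e1
          have e2 : Aval n I c' = Aval n I c := by
            rw [hc']; exact Aval_update_ne hne1
          rw [Nat.even_iff] at hfeas ⊢
          rw [e2]
          omega
        · have e1 : Sval n I c' = Sval n I c := by rw [hc']; exact Sval_update_not hi0
          have e2 : Aval n I c' = Aval n I c := by rw [hc']; exact Aval_update_ne hne1
          rw [e1, e2]; exact hfeas
      have heq := hmin c' hupd ((mem_Jw_iff hn hneven hI c').mpr hfeas')
      have hci := inj_on hn hI heq i hi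
      rw [hc', Function.update_self] at hci
      omega
    have reduce2 : ∀ u w, u ∈ I → w ∈ I → u ≠ w → c u = 2 → c w = 2 →
        (u = n-1 ∨ (u ∈ I0 n I ∧ Odd u)) → (w ∈ I0 n I ∧ Odd w) → False := by
      intro u w hu hw huw hcu hcw hu' hw'
      set c' := Function.update (Function.update c u 1) w 1 with hc'
      have hupd : ∀ t ∈ I, 1 ≤ c' t ∧ c' t ≤ c t := by
        intro t ht
        rw [hc']
        by_cases e1 : t = w
        · subst e1; rw [Function.update_self]; omega
        · rw [Function.update_of_ne e1]
          by_cases e2 : t = u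
          · subst e2; rw [Function.update_self]; omega
          · rw [Function.update_of_ne e2]; exact ⟨h1 t ht, le_rfl⟩
      have hwne1 : w ≠ n - 1 := by have := mem_I0.mp hw'.1; omega
      have hSw := Sval_update_mem (c := Function.update c u 1) (j := w) (v := 1) hw'.1
      rw [Function.update_of_ne (Ne.symm huw), hcw, ← hc'] at hSw
      have hwodd : w % 2 = 1 := Nat.odd_iff.mp hw'.2
      have hfeas' : Even (Sval n I c' + Aval n I c') := by
        rcases hu' with hu1 | hu0
        · have hSu : Sval n I (Function.update c u 1) = Sval n I c := by
            refine Sval_update_not ?_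
            rw [mem_I0, hu1]
            rintro ⟨-, -, h3⟩
            omega
          have hAw : Aval n I c' = Aval n I (Function.update c u 1) := by
            rw [hc']; exact Aval_update_ne hwne1
          have hAu : Aval n I (Function.update c u 1) = 1 := by
            rw [hu1]; exact Aval_update_eq (hu1 ▸ hu)
          have hAc : Aval n I c = 2 := by
            unfold Aval; rw [if_pos (hu1 ▸ hu), ← hu1, hcu]
          rw [Nat.even_iff] at hfeas ⊢
          rw [hAc] at hfeas
          omega
        · have hune1 : u ≠ n - 1 := by have := mem_I0.mp hu0.1; omega
          have hSu := Sval_update_mem (c := c) (j := u) (v := 1) hu0.1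
          rw [hcu] at hSu
          have huodd : u % 2 = 1 := Nat.odd_iff.mp hu0.2
          have hAw : Aval n I c' = Aval n I c := by
            rw [hc', Aval_update_ne hwne1, Aval_update_ne hune1]
          rw [Nat.even_iff] at hfeas ⊢
          rw [hAw]
          omega
      have heq := hmin c' hupd ((mem_Jw_iff hn hneven hI c').mpr hfeas')
      have hci := inj_on hn hI heq w hw
      rw [hc', Function.update_self] at hci
      omega
    have h3' : ∀ i ∈ I, ∀ j ∈ I, i ≠ j → c i = 2 → c j = 2 → False := by
      intro i hi j hj hij hci2 hcj2
      rcases h2' i hi hci2 with hi1 | hi0 <;> rcases h2' j hj hcj2 with hj1 | hj0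
      · exact hij (hi1.trans hj1.symm)
      · exact reduce2 i j hi hj hij hci2 hcj2 (Or.inl hi1) hj0
      · exact reduce2 j i hj hi (Ne.symm hij) hcj2 hci2 (Or.inl hj1) hi0
      · exact reduce2 i j hi hj hij hci2 hcj2 (Or.inr hi0) hj0
    by_cases hall : ∀ i ∈ I, c i = 1
    · have hXi : ∑ i ∈ I, c i • Hso n i = ∑ i ∈ I, Hso n i := sum_smul_all_one hall
      have hS : Sval n I c = p := Sval_all_one (fun i hi => hall i (mem_I0.mp hi).1)
      have hA : Aval n I c = deltaI I (n-1) := Aval_eq_delta_mul (fun h => hall _ h)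
      rw [hS, hA] at hfeas
      by_cases hd : n - 1 ∈ I
      · have hδ : deltaI I (n-1) = 1 := by simp [deltaI, hd]
        rw [hδ] at hfeas
        have hpodd : Odd p := by
          rw [Nat.odd_iff]; rw [Nat.even_iff] at hfeas; omega
        have hcard := card_inter_pair (I := I) hn
        rw [if_pos hd] at hcard
        have he0 : epsI n I 0 = 0 := by
          unfold epsI
          rw [hcard]
          have hh : (1:ℕ) + (if n ∈ I then 1 else 0) ≠ 0 := by split_ifs <;> omega
          rw [if_neg hh]
        have he1 : epsI n I 1 * deltaI I n = 0 := by
          by_cases hnI : n ∈ I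
          · have : epsI n I 1 = 0 := by
              unfold epsI
              rw [hcard, if_pos hnI, if_neg (by omega)]
            rw [this, zero_mul]
          · have : deltaI I n = 0 := by simp [deltaI, hnI]
            rw [this, mul_zero]
        refine Or.inr ⟨hpodd, 0, ?_, ?_⟩
        · rintro (h0 | h1)
          · exact absurd he0 h0
          · exact absurd he1 h1
        · rw [hXi, he0, he1]
          simp
      · have hδ : deltaI I (n-1) = 0 := by simp [deltaI, hd]
        rw [hδ, add_zero] at hfeas
        refine Or.inl ⟨hfeas, Or.inl ?_⟩
        rw [hXi, hδ, zero_smul, add_zero]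
    · push_neg at hall
      obtain ⟨w, hw, hcw1⟩ := hall
      have hcw : c w = 2 := by
        have := h1 w hw; have := hb w hw; omega
      have honly : ∀ t ∈ I, t ≠ w → c t = 1 := by
        intro t ht htw
        by_contra hct
        have hct2 : c t = 2 := by have := h1 t ht; have := hb t ht; omega
        exact h3' t ht w hw htw hct2 hcw
      have hXi : ∑ i ∈ I, c i • Hso n i = (∑ i ∈ I, Hso n i) + Hso n w :=
        sum_smul_one_except hw hcw honly
      rcases h2' w hw hcw with hw1 | ⟨hw0I, hwodd⟩
      · have hd : n - 1 ∈ I := hw1 ▸ hw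
        have hS : Sval n I c = p := Sval_all_one (fun i hi => by
          refine honly i (mem_I0.mp hi).1 ?_
          have := mem_I0.mp hi
          omega)
        have hA : Aval n I c = 2 := by
          unfold Aval; rw [if_pos hd, ← hw1, hcw]
        rw [hS, hA, Nat.even_iff] at hfeas
        have hpe : Even p := by rw [Nat.even_iff]; omega
        have hδ : deltaI I (n-1) = 1 := by simp [deltaI, hd]
        refine Or.inl ⟨hpe, Or.inl ?_⟩
        rw [hXi, hδ, one_smul, hw1]
      · have hwne : w ≠ n - 1 := by have := mem_I0.mp hw0I; omega
        have hS : Sval n I c + w = p + w * 2 := by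
          have hx := Sval_one_except hw0I (fun i hi hne => honly i (mem_I0.mp hi).1 hne)
          rw [hcw] at hx; exact hx
        have hA : Aval n I c = deltaI I (n-1) :=
          Aval_eq_delta_mul (fun h => honly _ h (Ne.symm hwne))
        have hwodd' : w % 2 = 1 := Nat.odd_iff.mp hwodd
        rw [hA] at hfeas
        by_cases hd : n - 1 ∈ I
        · have hδ : deltaI I (n-1) = 1 := by simp [deltaI, hd]
          rw [hδ, Nat.even_iff] at hfeas
          have hpe : Even p := by rw [Nat.even_iff]; omega
          refine Or.inl ⟨hpe, Or.inr ⟨w, fun _ => ⟨hw0I, hwodd⟩, ?_⟩⟩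
          rw [hXi, hδ, one_smul]
        · have hδ : deltaI I (n-1) = 0 := by simp [deltaI, hd]
          rw [hδ, add_zero, Nat.even_iff] at hfeas
          have hpo : Odd p := by rw [Nat.odd_iff]; omega
          have hcard := card_inter_pair (I := I) hn
          rw [if_neg hd] at hcard
          by_cases hnI : n ∈ I
          · have he0 : epsI n I 0 = 0 := by
              unfold epsI; rw [hcard, if_pos hnI]; norm_num
            have he1 : epsI n I 1 = 1 := by
              unfold epsI; rw [hcard, if_pos hnI]; norm_num
            have hδn : deltaI I n = 1 := by simp [deltaI, hnI]
            refine Or.inr ⟨hpo, w, fun _ => ⟨hw0I, hwodd⟩, ?_⟩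
            rw [hXi, he0, he1, hδn, zero_smul, add_zero, one_mul, one_smul]
          · have he0 : epsI n I 0 = 1 := by
              unfold epsI; rw [hcard, if_neg hnI]; norm_num
            have hδn : deltaI I n = 0 := by simp [deltaI, hnI]
            refine Or.inr ⟨hpo, w, fun _ => ⟨hw0I, hwodd⟩, ?_⟩
            rw [hXi, he0, hδn, one_smul, mul_zero, zero_smul, add_zero]
  · rintro (⟨hpe, hopt⟩ | ⟨hpo, j, hjc, hξ⟩)
    · have hnotodd : ∀ (h1 : deltaI I (n-1) = 1), ¬ Even (p + deltaI I (n-1)) := by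
        intro hδ
        rw [hδ]
        rw [Nat.even_iff] at hpe ⊢
        omega
      rcases hopt with hξ | ⟨j, hjc, hξ⟩
      · by_cases hd : n - 1 ∈ I
        · have hδ : deltaI I (n-1) = 1 := by simp [deltaI, hd]
          rw [hξ, hδ, one_smul]
          exact canon_two (n-1) hd (Or.inl rfl) (hnotodd hδ)
        · have hδ : deltaI I (n-1) = 0 := by simp [deltaI, hd]
          rw [hξ, hδ, zero_smul, add_zero]
          exact canon_one (by rw [hδ, add_zero]; exact hpe)
      · by_cases hd : n - 1 ∈ I
        · have hδ : deltaI I (n-1) = 1 := by simp [deltaI, hd]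
          obtain ⟨hj0, hjodd⟩ := hjc (by rw [hδ]; exact one_ne_zero)
          rw [hξ, hδ, one_smul]
          exact canon_two j (mem_I0.mp hj0).1 (Or.inr ⟨hj0, hjodd⟩) (hnotodd hδ)
        · have hδ : deltaI I (n-1) = 0 := by simp [deltaI, hd]
          rw [hξ, hδ, zero_smul, add_zero]
          exact canon_one (by rw [hδ, add_zero]; exact hpe)
    · have hnoteven : deltaI I (n-1) = 0 → ¬ Even (p + deltaI I (n-1)) := by
        intro hδ
        rw [hδ, add_zero, Nat.even_iff]
        rw [Nat.odd_iff] at hpo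
        omega
      by_cases hd : n - 1 ∈ I
      · have hδ : deltaI I (n-1) = 1 := by simp [deltaI, hd]
        have hcard := card_inter_pair (I := I) hn
        rw [if_pos hd] at hcard
        have he0 : epsI n I 0 = 0 := by
          unfold epsI
          rw [hcard]
          have hh : (1:ℕ) + (if n ∈ I then 1 else 0) ≠ 0 := by split_ifs <;> omega
          rw [if_neg hh]
        have he1 : epsI n I 1 * deltaI I n = 0 := by
          by_cases hnI : n ∈ I
          · have : epsI n I 1 = 0 := by
              unfold epsI
              rw [hcard, if_pos hnI, if_neg (by omega)]
            rw [this, zero_mul]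
          · have : deltaI I n = 0 := by simp [deltaI, hnI]
            rw [this, mul_zero]
        rw [hξ, he0, he1]
        simp only [zero_smul, add_zero]
        refine canon_one ?_
        rw [hδ, Nat.even_iff]
        rw [Nat.odd_iff] at hpo
        omega
      · have hδ : deltaI I (n-1) = 0 := by simp [deltaI, hd]
        have hcard := card_inter_pair (I := I) hn
        rw [if_neg hd] at hcard
        by_cases hnI : n ∈ I
        · have he0 : epsI n I 0 = 0 := by
            unfold epsI; rw [hcard, if_pos hnI]; norm_num
          have he1 : epsI n I 1 = 1 := by
            unfold epsI; rw [hcard, if_pos hnI]; norm_num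
          have hδn : deltaI I n = 1 := by simp [deltaI, hnI]
          obtain ⟨hj0, hjodd⟩ := hjc (Or.inr (by rw [he1, hδn]; norm_num))
          rw [hξ, he0, he1, hδn, zero_smul, add_zero, one_mul, one_smul]
          exact canon_two j (mem_I0.mp hj0).1 (Or.inr ⟨hj0, hjodd⟩) (hnoteven hδ)
        · have he0 : epsI n I 0 = 1 := by
            unfold epsI; rw [hcard, if_neg hnI]; norm_num
          have hδn : deltaI I n = 0 := by simp [deltaI, hnI]
          obtain ⟨hj0, hjodd⟩ := hjc (Or.inl (by rw [he0]; norm_num))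
          rw [hξ, he0, hδn, one_smul, mul_zero, zero_smul, add_zero]
          exact canon_two j (mem_I0.mp hj0).1 (Or.inr ⟨hj0, hjodd⟩) (hnoteven hδ)
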